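/- Let $n \ge 1$, let $j \ge 1$, and let $u = x_{\alpha(1)} \cdots x_{\alpha(j)}$ be a monomial of degree $j$ in $S = K[x_1,\ldots,x_n]$ with $1 \le \alpha(1) \le \cdots \le \alpha(j) \le n$. Then the number of monomials $v \in S$ of degree $j$ with $v <_{lex} u$ equals $\sum_{i=1}^{j} \binom{n - \alpha(j+1-i) + i - 1}{i}$, where $<_{lex}$ is the lexicographic order with $x_1 > x_2 > \cdots > x_n$. -/

import Mathlib

/-!
A monomial `v` of degree `d + 1` lies lex-below `u = x_a ⋅ u'`, where `x_a` is the largest variable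
occurring in `u`, exactly when either `v` involves only the variables `x_k` with `k > a`, or
`v = x_a ⋅ v'` with `v' <_lex u'`. Counting the first kind by a multichoose coefficient and the
second kind by induction on the degree produces the sum one term at a time.
-/

/-- `v <_lex u` for exponent vectors, lex order with `x_1 > x_2 > ⋯ > x_n`. -/
def lexLt {n : ℕ} (v u : Fin n →₀ ℕ) : Prop :=
  ∃ i : Fin n, (∀ j < i, v j = u j) ∧ v i < u i

open Finset Finsupp

variable {n : ℕ}

instance (v u : Fin n →₀ ℕ) : Decidable (lexLt v u) :=
  inferInstanceAs (Decidable (∃ i : Fin n, (∀ j < i, v j = u j) ∧ v i < u i))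

lemma lexLt_add_left_iff (s v u : Fin n →₀ ℕ) : lexLt (s + v) (s + u) ↔ lexLt v u := by
  simp only [lexLt, Finsupp.coe_add, Pi.add_apply, add_right_inj, add_lt_add_iff_left]

lemma lexLt_single_add_iff {a : Fin n} {u v : Fin n →₀ ℕ} (hu : ∀ k < a, u k = 0) :
    lexLt v (single a 1 + u) ↔ v.support ⊆ Ioi a ∨ ∃ w, lexLt w u ∧ single a 1 + w = v := by
  constructor
  · rintro ⟨i, hagree, hlt⟩
    have hai : a ≤ i := by
      by_contra! hia
      simp [single_eq_of_ne hia.ne, hu i hia] at hlt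
    have hbelow : ∀ k < a, v k = 0 := fun k hk => by
      simp [hagree k (hk.trans_le hai), single_eq_of_ne hk.ne, hu k hk]
    by_cases ha : v a = 0
    · left
      intro k hk
      rw [mem_Ioi]
      by_contra! hka
      rcases hka.lt_or_eq with hka | rfl
      · exact mem_support_iff.1 hk (hbelow k hka)
      · exact mem_support_iff.1 hk ha
    · have hle : single a 1 ≤ v := single_le_iff.2 (Nat.one_le_iff_ne_zero.2 ha)
      refine Or.inr ⟨v - single a 1, ?_, add_tsub_cancel_of_le hle⟩
      rw [← lexLt_add_left_iff (single a 1), add_tsub_cancel_of_le hle]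
      exact ⟨i, hagree, hlt⟩
  · rintro (hsupp | ⟨w, hw, rfl⟩)
    · have hva : ∀ k ≤ a, v k = 0 := fun k hk =>
        notMem_support_iff.1 fun hk' => (mem_Ioi.1 (hsupp hk')).not_ge hk
      refine ⟨a, fun k hk => ?_, ?_⟩
      · simp [hva k hk.le, single_eq_of_ne hk.ne, hu k hk]
      · simp [hva a le_rfl]
    · exact (lexLt_add_left_iff _ _ _).2 hw

def lexBelow (u : Fin n →₀ ℕ) (m : ℕ) : Finset (Fin n →₀ ℕ) :=
  {v ∈ univ.finsuppAntidiag m | lexLt v u}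

lemma mem_lexBelow {u v : Fin n →₀ ℕ} {m : ℕ} :
    v ∈ lexBelow u m ↔ (v.sum fun _ e => e) = m ∧ lexLt v u := by
  simp only [lexBelow, mem_filter, mem_finsuppAntidiag', subset_univ, and_true]

lemma natCard_lexLt_eq_card_lexBelow (u : Fin n →₀ ℕ) (m : ℕ) :
    Nat.card {v : Fin n →₀ ℕ // (v.sum fun _ e => e) = m ∧ lexLt v u} = #(lexBelow u m) := by
  rw [← Fintype.card_coe, ← Nat.card_eq_fintype_card]
  exact Nat.card_congr (Equiv.subtypeEquivRight fun _ => mem_lexBelow.symm)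

lemma lexBelow_single_add {a : Fin n} {u : Fin n →₀ ℕ} (hu : ∀ k < a, u k = 0) (d : ℕ) :
    lexBelow (single a 1 + u) (d + 1) =
      (Ioi a).finsuppAntidiag (d + 1) ∪ (lexBelow u d).map (addLeftEmbedding (single a 1)) := by
  have hdegree (w : Fin n →₀ ℕ) :
      ((single a 1 + w).sum fun _ e => e) = (w.sum fun _ e => e) + 1 := by
    rw [sum_add_index' (fun _ => rfl) (fun _ _ _ => rfl), sum_single_index rfl, add_comm]
  ext v
  simp only [mem_lexBelow, mem_union, mem_map, mem_finsuppAntidiag', lexLt_single_add_iff hu,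
    addLeftEmbedding_apply]
  constructor
  · rintro ⟨hv, hsupp | ⟨w, hw, rfl⟩⟩
    · exact Or.inl ⟨hv, hsupp⟩
    · exact Or.inr ⟨w, ⟨by simpa [hdegree] using hv, hw⟩, rfl⟩
  · rintro (⟨hv, hsupp⟩ | ⟨w, ⟨hw, hlt⟩, rfl⟩)
    · exact ⟨hv, Or.inl hsupp⟩
    · exact ⟨by rw [hdegree, hw], Or.inr ⟨w, hlt, rfl⟩⟩

lemma card_lexBelow_single_add {a : Fin n} {u : Fin n →₀ ℕ} (hu : ∀ k < a, u k = 0) (d : ℕ) :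
    #(lexBelow (single a 1 + u) (d + 1)) = (n - 1 - a).multichoose (d + 1) + #(lexBelow u d) := by
  have hdisj : Disjoint ((Ioi a).finsuppAntidiag (d + 1))
      ((lexBelow u d).map (addLeftEmbedding (single a 1))) := by
    refine disjoint_left.2 fun v hv hv' => ?_
    obtain ⟨w, -, rfl⟩ := mem_map.1 hv'
    have ha : a ∈ (single a 1 + w).support := by simp
    exact (mem_Ioi.1 ((mem_finsuppAntidiag.1 hv).2 ha)).false
  rw [lexBelow_single_add hu, card_union_of_disjoint hdisj, card_map,
    card_finsuppAntidiag_nat_eq_multichoose, Fin.card_Ioi]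

theorem stmt_7 (n j : ℕ)
    (α : Fin j → Fin n) (hα : Monotone α) :
    Nat.card {v : Fin n →₀ ℕ //
        (v.sum fun _ e => e) = j ∧ lexLt v (∑ i : Fin j, Finsupp.single (α i) 1)} =
      ∑ i : Fin j, Nat.choose (n - 1 - (α (Fin.rev i)).val + i.val) (i.val + 1) := by
  rw [natCard_lexLt_eq_card_lexBelow]
  induction j with
  | zero => simp [lexBelow, lexLt]
  | succ j ih =>
    have hu : ∀ k < α 0, (∑ i : Fin j, single (α i.succ) 1) k = 0 := fun k hk => by
      rw [finsetSum_apply]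
      exact sum_eq_zero fun i _ => single_eq_of_ne (hk.trans_le (hα (Fin.zero_le _))).ne
    rw [Fin.sum_univ_succ, card_lexBelow_single_add hu,
      ih (fun i => α i.succ) (hα.comp Fin.strictMono_succ.monotone), Fin.sum_univ_castSucc,
      add_comm, Nat.multichoose_eq]
    simp only [Fin.rev_castSucc, Fin.val_castSucc, Fin.rev_last, Fin.val_last]
    congr 2
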